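/- arXiv:2012.11478 — 7 statements merged into one kernel-verified Lean document; each statement's English description precedes it below -/
import Mathlib

section
/- Let x, y ∈ ℝⁿ be nondecreasing vectors. Suppose m < n, the first m entries of x equal a, the remaining n−m entries equal b with a < b. If ∑_{i=1}^n y_i ≤ ∑_{i=1}^n x_i and y_{m+1} ≥ b, then x is weakly majorized from above by y, i.e. for every k with 1 ≤ k ≤ n, ∑_{i=1}^k x_i ≥ ∑_{i=1}^k y_i. -/
/-!
For `k ≥ m` the claim is the total-sum hypothesis minus the tail `∑_{i ≥ k}`, on which
`y ≥ y_{m+1} ≥ b = x`. For `k < m` it follows from the case `k = m`, `∑_{i<m} y_i ≤ m a`,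
because prefix averages of a nondecreasing vector are nondecreasing (Chebyshev's sum
inequality against the antitone indicator of `{i < k}`), while those of `x` are constant `a`.
-/

open Finset

theorem Finset.sum_filter_le_sum_filter_of_sum_le {ι α : Type*} [AddCommGroup α] [PartialOrder α]
    [IsOrderedAddMonoid α] {s : Finset ι} (p : ι → Prop) [DecidablePred p] {f g : ι → α}
    (hsum : ∑ i ∈ s, f i ≤ ∑ i ∈ s, g i) (hcompl : ∀ i ∈ s, ¬ p i → g i ≤ f i) :
    ∑ i ∈ s with p i, f i ≤ ∑ i ∈ s with p i, g i := by
  rw [← sum_filter_add_sum_filter_not s p f, ← sum_filter_add_sum_filter_not s p g] at hsum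
  have htail : ∑ i ∈ s with ¬ p i, g i ≤ ∑ i ∈ s with ¬ p i, f i :=
    sum_le_sum fun i hi => hcompl i (mem_filter.1 hi).1 (mem_filter.1 hi).2
  exact le_of_add_le_add_right (hsum.trans (add_le_add_right htail _))

theorem Fin.sum_filter_val_lt_of_eq_const {α : Type*} [AddCommMonoid α] {n k : ℕ} (hkn : k ≤ n)
    {f : Fin n → α} {a : α} (hf : ∀ i : Fin n, (i : ℕ) < k → f i = a) :
    ∑ i ∈ univ.filter (fun i : Fin n => (i : ℕ) < k), f i = k • a := by
  rw [sum_congr rfl fun i hi => hf i (mem_filter.1 hi).2, Finset.sum_const,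
    Fin.card_filter_val_lt, min_eq_right hkn]

theorem Monotone.mul_sum_filter_val_lt_le {α : Type*} [Field α] [LinearOrder α]
    [IsStrictOrderedRing α] {n k m : ℕ} {f : Fin n → α} (hf : Monotone f) (hkm : k ≤ m)
    (hmn : m ≤ n) :
    (m : α) * ∑ i ∈ univ.filter (fun i : Fin n => (i : ℕ) < k), f i ≤
      k * ∑ i ∈ univ.filter (fun i : Fin n => (i : ℕ) < m), f i := by
  set g : Fin n → α := fun i => if (i : ℕ) < k then 1 else 0
  have hg : Antitone g := fun i j hij => by
    have : (i : ℕ) ≤ j := hij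
    simp only [g]; split_ifs <;> first | omega | norm_num
  have hfilter : univ.filter (fun i : Fin n => (i : ℕ) < m ∧ (i : ℕ) < k) =
      univ.filter (fun i : Fin n => (i : ℕ) < k) := by
    ext i; simp only [mem_filter, mem_univ, true_and]; omega
  have hprod : ∑ i ∈ univ.filter (fun i : Fin n => (i : ℕ) < m), f i * g i =
      ∑ i ∈ univ.filter (fun i : Fin n => (i : ℕ) < k), f i := by
    simp only [g, mul_ite, mul_one, mul_zero, ← sum_filter, filter_filter, hfilter]
  have hsumg : ∑ i ∈ univ.filter (fun i : Fin n => (i : ℕ) < m), g i = k := by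
    simp only [g, ← sum_filter, filter_filter, hfilter, Finset.sum_const, Fin.card_filter_val_lt,
      min_eq_right (hkm.trans hmn), nsmul_one]
  have chebyshev := ((hf.antivary hg).antivaryOn
    (univ.filter (fun i : Fin n => (i : ℕ) < m) : Set (Fin n))).card_mul_sum_le_sum_mul_sum
  rw [hprod, hsumg, Fin.card_filter_val_lt, min_eq_right hmn] at chebyshev
  exact chebyshev.trans_eq (mul_comm _ _)

theorem stmt_0_general (n m : ℕ) (hmn : m < n) (a b : ℝ)
    (x y : Fin n → ℝ) (hy : Monotone y)
    (hxa : ∀ i : Fin n, (i : ℕ) < m → x i = a)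
    (hxb : ∀ i : Fin n, m ≤ (i : ℕ) → x i = b)
    (hsum : ∑ i, y i ≤ ∑ i, x i)
    (hym : b ≤ y ⟨m, hmn⟩) :
    ∀ k, 1 ≤ k → k ≤ n →
      ∑ i ∈ Finset.univ.filter (fun i : Fin n => (i : ℕ) < k), y i ≤
        ∑ i ∈ Finset.univ.filter (fun i : Fin n => (i : ℕ) < k), x i := by
  have hprefix : ∀ k, m ≤ k → ∑ i ∈ univ.filter (fun i : Fin n => (i : ℕ) < k), y i ≤
      ∑ i ∈ univ.filter (fun i : Fin n => (i : ℕ) < k), x i := fun k hmk =>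
    sum_filter_le_sum_filter_of_sum_le _ hsum fun i _ hik => by
      rw [hxb i (by omega)]
      exact hym.trans (hy (show m ≤ (i : ℕ) by omega))
  intro k _ hkn
  rcases le_or_gt m k with hmk | hkm
  · exact hprefix k hmk
  have hxk := Fin.sum_filter_val_lt_of_eq_const hkn fun i hi => hxa i (hi.trans hkm)
  have hxm := Fin.sum_filter_val_lt_of_eq_const hmn.le hxa
  rw [nsmul_eq_mul] at hxk hxm
  have hm : (0 : ℝ) < m := by exact_mod_cast (Nat.zero_le k).trans_lt hkm
  refine le_of_mul_le_mul_left ?_ hm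
  calc (m : ℝ) * ∑ i ∈ univ.filter (fun i : Fin n => (i : ℕ) < k), y i
      ≤ k * ∑ i ∈ univ.filter (fun i : Fin n => (i : ℕ) < m), y i :=
        hy.mul_sum_filter_val_lt_le hkm.le hmn.le
    _ ≤ k * (m * a) := by
      rw [← hxm]; exact mul_le_mul_of_nonneg_left (hprefix m le_rfl) k.cast_nonneg
    _ = m * ∑ i ∈ univ.filter (fun i : Fin n => (i : ℕ) < k), x i := by rw [hxk]; ring

/-- Lemma `suffMopt`. If x is nondecreasing with first m entries a and
remaining n-m entries b (a < b), y nondecreasing with total sum ≤ that of x and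
y_{m+1} ≥ b, then x is weakly majorized from above by y. -/
theorem stmt_0 (n m : ℕ) (hmn : m < n) (a b : ℝ) (hab : a < b)
    (x y : Fin n → ℝ) (hx : Monotone x) (hy : Monotone y)
    (hxa : ∀ i : Fin n, (i : ℕ) < m → x i = a)
    (hxb : ∀ i : Fin n, m ≤ (i : ℕ) → x i = b)
    (hsum : ∑ i, y i ≤ ∑ i, x i)
    (hym : b ≤ y ⟨m, hmn⟩) :
    ∀ k, 1 ≤ k → k ≤ n →
      ∑ i ∈ Finset.univ.filter (fun i : Fin n => (i : ℕ) < k), y i ≤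
        ∑ i ∈ Finset.univ.filter (fun i : Fin n => (i : ℕ) < k), x i :=
  stmt_0_general n m hmn a b x y hy hxa hxb hsum hym
end

section
/- If A and B are real symmetric n×n matrices with A − B positive semidefinite, then the vector of eigenvalues of A (in nondecreasing order) is weakly majorized from above by the vector of eigenvalues of B, i.e. for each k, the sum of the k smallest eigenvalues of A is at least the sum of the k smallest eigenvalues of B. -/
/-!
Ky Fan's argument. Let `u₀, …, u_(k-1)` be orthonormal eigenvectors of `A` for its `k` smallest
eigenvalues, so that their sum is `∑ ⟪uᵢ, A uᵢ⟫ ≥ ∑ ⟪uᵢ, B uᵢ⟫` because `A - B ⪰ 0`. In an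
orthonormal eigenbasis `(bⱼ)` of `B` with eigenvalues `μⱼ` the right side is `∑ⱼ μⱼ tⱼ` with
`tⱼ = ∑ᵢ ⟪bⱼ, uᵢ⟫²`; Bessel gives `0 ≤ tⱼ ≤ 1` and Parseval gives `∑ⱼ tⱼ = k`, and any such
weighted sum of the `μⱼ` is at least the sum of the `k` smallest of them.
-/

open Finset
open scoped RealInnerProductSpace

section Rearrangement

variable {R : Type*} [CommRing R] [LinearOrder R] [IsStrictOrderedRing R]

theorem sum_le_sum_mul_of_forall_le_of_notMem {ι : Type*} [Fintype ι] [DecidableEq ι]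
    {f t : ι → R} {s : Finset ι}
    (hf : ∀ i ∈ s, ∀ j ∉ s, f i ≤ f j) (ht₀ : ∀ j, 0 ≤ t j) (ht₁ : ∀ j, t j ≤ 1)
    (ht : ∑ j, t j = #s) :
    ∑ i ∈ s, f i ≤ ∑ j, f j * t j := by
  obtain ⟨c, hcs, hcsc⟩ : ∃ c, (∀ i ∈ s, f i ≤ c) ∧ ∀ j ∉ s, c ≤ f j := by
    rcases sᶜ.eq_empty_or_nonempty with h | h
    · obtain ⟨c, hc⟩ := (Set.finite_range f).bddAbove
      exact ⟨c, fun i _ => hc ⟨i, rfl⟩, fun j hj => absurd (mem_compl.2 hj) (by simp [h])⟩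
    · exact ⟨sᶜ.inf' h f, fun i hi => le_inf' _ _ fun j hj => hf i hi j (mem_compl.1 hj),
        fun j hj => inf'_le _ (mem_compl.2 hj)⟩
  -- each term `(f j - c) * (1_s j - t j)` is nonpositive, and `c` drops out since `∑ t = #s`
  have hterm : ∀ j, (f j - c) * ((if j ∈ s then 1 else 0) - t j) ≤ 0 := by
    intro j
    split_ifs with hj
    · exact mul_nonpos_of_nonpos_of_nonneg (sub_nonpos.2 (hcs j hj)) (sub_nonneg.2 (ht₁ j))
    · exact mul_nonpos_of_nonneg_of_nonpos (sub_nonneg.2 (hcsc j hj)) (by linarith [ht₀ j])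
  have hsum := sum_nonpos fun j (_ : j ∈ univ) => hterm j
  simp only [mul_sub, sub_mul, mul_ite, mul_one, mul_zero, sum_sub_distrib, sum_ite_mem,
    univ_inter, ← mul_sum, ht, sum_const, nsmul_eq_mul] at hsum
  linarith

theorem sum_sort_lt_le_sum_mul {n k : ℕ} (f t : Fin n → R) (ht₀ : ∀ j, 0 ≤ t j)
    (ht₁ : ∀ j, t j ≤ 1) (ht : ∑ j, t j = k) :
    ∑ i ∈ univ.filter (fun i : Fin n => (i : ℕ) < k), (f ∘ Tuple.sort f) i ≤ ∑ j, f j * t j := by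
  set σ := Tuple.sort f
  have hkn : k ≤ n := by
    have : (k : R) ≤ n := by
      simpa [← ht] using sum_le_sum fun j (_ : j ∈ univ) => ht₁ j
    exact_mod_cast this
  set P := univ.filter (fun i : Fin n => (i : ℕ) < k)
  have hcard : #(P.map σ.toEmbedding) = k := by
    rw [card_map, Fin.card_filter_val_lt, min_eq_right hkn]
  rw [show ∑ i ∈ P, (f ∘ σ) i = ∑ j ∈ P.map σ.toEmbedding, f j from
    (sum_map P σ.toEmbedding f).symm]
  refine sum_le_sum_mul_of_forall_le_of_notMem ?_ ht₀ ht₁ (hcard ▸ ht)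
  intro i hi j hj
  obtain ⟨a, ha, rfl⟩ := mem_map.1 hi
  have hja : σ.symm j ∉ P := fun h => hj (mem_map.2 ⟨_, h, σ.apply_symm_apply j⟩)
  simp only [P, mem_filter, mem_univ, true_and, not_lt] at ha hja
  calc f (σ a) ≤ f (σ (σ.symm j)) := Tuple.monotone_sort f (Fin.le_def.2 (by omega))
    _ = f j := by rw [σ.apply_symm_apply]

end Rearrangement

namespace Matrix

variable {ι : Type*} [Fintype ι] [DecidableEq ι]

theorem PosSemidef.inner_toEuclideanLin_le {A B : Matrix ι ι ℝ} (hAB : (A - B).PosSemidef)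
    (x : EuclideanSpace ℝ ι) : ⟪x, B.toEuclideanLin x⟫ ≤ ⟪x, A.toEuclideanLin x⟫ := by
  have := (isPositive_toEuclideanLin_iff.2 hAB).inner_nonneg_right x
  rw [map_sub, LinearMap.sub_apply, inner_sub_right] at this
  linarith

namespace IsHermitian

theorem toEuclideanLin_eigenvectorBasis {𝕜 : Type*} [RCLike 𝕜] {A : Matrix ι ι 𝕜}
    (hA : A.IsHermitian) (j : ι) :
    A.toEuclideanLin (hA.eigenvectorBasis j) = hA.eigenvalues j • hA.eigenvectorBasis j := by
  ext i
  simpa using congrFun (hA.mulVec_eigenvectorBasis j) i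

theorem inner_eigenvectorBasis_toEuclideanLin {A : Matrix ι ι ℝ} (hA : A.IsHermitian) (j : ι) :
    ⟪hA.eigenvectorBasis j, A.toEuclideanLin (hA.eigenvectorBasis j)⟫ = hA.eigenvalues j := by
  rw [hA.toEuclideanLin_eigenvectorBasis, real_inner_smul_right, real_inner_self_eq_norm_sq,
    hA.eigenvectorBasis.orthonormal.1 j, one_pow, mul_one]

theorem inner_toEuclideanLin_self {A : Matrix ι ι ℝ} (hA : A.IsHermitian)
    (x : EuclideanSpace ℝ ι) :
    ⟪x, A.toEuclideanLin x⟫ = ∑ j, hA.eigenvalues j * ⟪hA.eigenvectorBasis j, x⟫ ^ 2 := by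
  rw [← hA.eigenvectorBasis.sum_inner_mul_inner]
  refine sum_congr rfl fun j _ => ?_
  rw [← isSymmetric_toEuclideanLin_iff.2 hA, hA.toEuclideanLin_eigenvectorBasis,
    real_inner_smul_left, real_inner_comm x]
  ring

end IsHermitian

theorem IsHermitian.sum_sort_eigenvalues_le_sum_inner {n : ℕ} {A : Matrix (Fin n) (Fin n) ℝ}
    (hA : A.IsHermitian) {κ : Type*} {u : κ → EuclideanSpace ℝ (Fin n)} (hu : Orthonormal ℝ u)
    (s : Finset κ) :
    ∑ i ∈ univ.filter (fun i : Fin n => (i : ℕ) < #s),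
        (hA.eigenvalues ∘ Tuple.sort hA.eigenvalues) i ≤
      ∑ i ∈ s, ⟪u i, A.toEuclideanLin (u i)⟫ := by
  set b := hA.eigenvectorBasis
  set t : Fin n → ℝ := fun j => ∑ i ∈ s, ⟪b j, u i⟫ ^ 2
  have ht₁ : ∀ j, t j ≤ 1 := fun j => by
    simpa [t, real_inner_comm, b.orthonormal.1 j] using hu.sum_inner_products_le (s := s) (b j)
  have ht : ∑ j, t j = #s := by
    simp only [t]
    rw [sum_comm]
    simp [b.sum_sq_inner_right, hu.1]
  calc _ ≤ ∑ j, hA.eigenvalues j * t j :=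
        sum_sort_lt_le_sum_mul _ t (fun j => sum_nonneg fun i _ => sq_nonneg _) ht₁ ht
    _ = ∑ i ∈ s, ⟪u i, A.toEuclideanLin (u i)⟫ := by
      simp only [t, hA.inner_toEuclideanLin_self, mul_sum]
      exact sum_comm

end Matrix

/-- If A, B are real symmetric n×n matrices with A − B positive
semidefinite, then the nondecreasing vector of eigenvalues of A weakly majorizes
from above that of B: each partial sum of the k smallest eigenvalues of A is at
least the corresponding sum for B. -/
theorem stmt_2 (n : ℕ) (A B : Matrix (Fin n) (Fin n) ℝ)
    (hA : A.IsHermitian) (hB : B.IsHermitian) (hAB : (A - B).PosSemidef) :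
    ∀ k, k ≤ n →
      ∑ i ∈ Finset.univ.filter (fun i : Fin n => (i : ℕ) < k),
          (hB.eigenvalues ∘ Tuple.sort hB.eigenvalues) i ≤
        ∑ i ∈ Finset.univ.filter (fun i : Fin n => (i : ℕ) < k),
          (hA.eigenvalues ∘ Tuple.sort hA.eigenvalues) i := by
  intro k hk
  set u := hA.eigenvectorBasis ∘ Tuple.sort hA.eigenvalues
  have hu : Orthonormal ℝ u :=
    hA.eigenvectorBasis.orthonormal.comp _ (Tuple.sort hA.eigenvalues).injective
  set P := univ.filter (fun i : Fin n => (i : ℕ) < k)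
  have hP : #P = k := by rw [Fin.card_filter_val_lt, min_eq_right hk]
  calc _ ≤ ∑ i ∈ P, ⟪u i, B.toEuclideanLin (u i)⟫ := by
        simpa only [hP] using hB.sum_sort_eigenvalues_le_sum_inner hu P
    _ ≤ ∑ i ∈ P, ⟪u i, A.toEuclideanLin (u i)⟫ :=
      sum_le_sum fun i _ => hAB.inner_toEuclideanLin_le (u i)
    _ = _ := sum_congr rfl fun i _ => hA.inner_eigenvectorBasis_toEuclideanLin _
end

section
/- Let A be an n×n positive semidefinite real matrix with all row sums zero, rank(A) ≤ ρ, and trace(A) ≥ T. Let a = T/ρ and d ≥ a, and set C = d·K_n − A where K_n = I_n − (1/n)J_n. Define γ ∈ ℝⁿ by γ_0 = 0, γ_i = d − a for 1 ≤ i ≤ ρ, and γ_i = d for ρ+1 ≤ i ≤ n−1. Then γ is weakly majorized from above by the vector of eigenvalues of C in nondecreasing order: for every k, ∑_{i<k} γ_i ≥ ∑_{i<k} μ_i(C). -/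
/-!
Since `A 𝟙 = 0` and `A` is symmetric, `A` preserves `𝟙ᗮ`, so `𝟙 / ‖𝟙‖` extends to an orthonormal
basis of common eigenvectors of `A` and `K_n`. Hence the spectrum of `A` is `0, μ₁, …, μₙ₋₁` with
`μⱼ ≥ 0`, and that of `C = d K_n − A` is `0, d − μ₁, …, d − μₙ₋₁`. The `k = q + 1` smallest
eigenvalues of `C` sum to at most any `k` of them; choosing `0` and `d − μⱼ` for the `q` largest
`μⱼ` gives `q d − (sum of the q largest μⱼ)`. At most `rank A ≤ ρ` of the `μⱼ` are nonzero; they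
sum to `tr A ≥ T = ρ a`, so the `q` largest sum to at least `min(q, ρ) a`, while
`γ₀ + ⋯ + γ_q = q d − min(q, ρ) a`.
-/

open Matrix Finset Module

theorem Monotone.sum_filter_val_lt_card_le_sum {M : Type*} [AddCommMonoid M] [LinearOrder M]
    [IsOrderedAddMonoid M] {n : ℕ} {f : Fin n → M} (hf : Monotone f) (s : Finset (Fin n)) :
    ∑ i ∈ univ.filter (fun i : Fin n => (i : ℕ) < #s), f i ≤ ∑ i ∈ s, f i := by
  induction s using Finset.induction_on_max with
  | empty => simp
  | insert a s hlt ih =>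
    have ha : a ∉ s := fun h => lt_irrefl a (hlt a h)
    have hsa : #s ≤ a := by
      simpa using card_le_card (fun x hx => mem_Iio.2 (hlt x hx) : s ⊆ Iio a)
    have hfilter : univ.filter (fun i : Fin n => (i : ℕ) < #(insert a s)) =
        insert ⟨#s, by omega⟩ (univ.filter (fun i : Fin n => (i : ℕ) < #s)) := by
      ext i
      simp only [card_insert_of_notMem ha, mem_filter, mem_univ, true_and, mem_insert,
        Fin.ext_iff]
      omega
    rw [hfilter, sum_insert (by simp), sum_insert ha]
    exact add_le_add (hf (Fin.le_def.2 hsa)) ih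

theorem Tuple.sum_filter_val_lt_card_comp_sort_le_sum {M : Type*} [AddCommMonoid M]
    [LinearOrder M] [IsOrderedAddMonoid M] {n : ℕ} (f : Fin n → M) (s : Finset (Fin n)) :
    ∑ i ∈ univ.filter (fun i : Fin n => (i : ℕ) < #s), (f ∘ sort f) i ≤ ∑ i ∈ s, f i := by
  simpa [sum_map] using
    (monotone_sort f).sum_filter_val_lt_card_le_sum (s.map (sort f).symm.toEmbedding)

theorem Tuple.comp_sort_eq_of_map_univ_eq {α : Type*} [LinearOrder α] {n : ℕ} {f g : Fin n → α}
    (h : univ.val.map f = univ.val.map g) : f ∘ sort f = g ∘ sort g := by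
  refine List.ofFn_injective (List.Perm.eq_of_sortedLE (monotone_sort f).sortedLE_ofFn
    (monotone_sort g).sortedLE_ofFn ?_)
  refine ((sort f).ofFn_comp_perm f).trans (List.Perm.trans ?_ ((sort g).ofFn_comp_perm g).symm)
  rw [← Multiset.coe_eq_coe, ← Fin.univ_val_map, ← Fin.univ_val_map, h]

theorem Fin.sum_univ_filter_val_lt {M : Type*} [AddCommMonoid M] {n k : ℕ} (hk : k ≤ n)
    (f : ℕ → M) : ∑ i ∈ univ.filter (fun i : Fin n => (i : ℕ) < k), f i = ∑ i ∈ range k, f i := by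
  rw [sum_filter, Fin.sum_univ_eq_sum_range (fun i => if i < k then f i else 0), ← sum_filter]
  congr 1
  ext i
  simp only [mem_filter, mem_range]
  omega

theorem Finset.exists_card_eq_forall_notMem_le {ι α : Type*} [Fintype ι] [DecidableEq ι]
    [LinearOrder α] (f : ι → α) {q : ℕ} (hq : q ≤ Fintype.card ι) :
    ∃ s : Finset ι, #s = q ∧ ∀ i ∈ s, ∀ j ∉ s, f j ≤ f i := by
  induction q with
  | zero => exact ⟨∅, by simp⟩
  | succ q ih =>
    obtain ⟨s, hs, htop⟩ := ih (by omega)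
    have hne : sᶜ.Nonempty := by
      rw [← card_pos, card_compl]
      omega
    obtain ⟨j₀, hj₀, hmax⟩ := exists_max_image sᶜ f hne
    refine ⟨insert j₀ s, by rw [card_insert_of_notMem (mem_compl.1 hj₀), hs], ?_⟩
    intro i hi j hj
    rw [mem_insert, not_or] at hj
    rcases mem_insert.1 hi with rfl | hi
    · exact hmax j (mem_compl.2 hj.2)
    · exact htop i hi j hj.2

theorem Finset.exists_card_eq_min_mul_sum_le_mul_sum {ι : Type*} [Fintype ι] [DecidableEq ι]
    (β : ι → ℝ) (hβ : ∀ j, 0 ≤ β j) {ρ q : ℕ} (hsupp : #{j | β j ≠ 0} ≤ ρ)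
    (hq : q ≤ Fintype.card ι) :
    ∃ s : Finset ι, #s = q ∧ (min q ρ : ℕ) * ∑ j, β j ≤ ρ * ∑ j ∈ s, β j := by
  obtain ⟨s, hs, htop⟩ := exists_card_eq_forall_notMem_le β hq
  refine ⟨s, hs, ?_⟩
  have hs0 : 0 ≤ ∑ j ∈ s, β j := sum_nonneg fun j _ => hβ j
  by_cases hout : ∀ j ∉ s, β j = 0
  · rw [← sum_subset (subset_univ s) fun j _ hj => hout j hj]
    exact mul_le_mul_of_nonneg_right (by exact_mod_cast min_le_right q ρ) hs0
  -- A nonzero entry outside `s` is dominated by every entry of `s`, so `s` lies in the support,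
  -- which has room for at most `ρ - q` further entries, each at most the mean over `s`.
  push Not at hout
  obtain ⟨j₀, hj₀s, hj₀⟩ := hout
  set N := univ.filter (fun j => β j ≠ 0)
  have hsN : s ⊆ N := fun i hi => by
    simpa [N] using (lt_of_lt_of_le ((hβ j₀).lt_of_ne' hj₀) (htop i hi j₀ hj₀s)).ne'
  have hcard : #(N \ s) + q ≤ ρ := by
    rw [card_sdiff_of_subset hsN, ← hs]
    have := card_le_card hsN
    omega
  have hmin : min q ρ = q := min_eq_left (by
    have : 0 < #(N \ s) := card_pos.2 ⟨j₀, mem_sdiff.2 ⟨by simpa [N] using hj₀, hj₀s⟩⟩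
    omega)
  have hsplit : ∑ j, β j = ∑ j ∈ s, β j + ∑ j ∈ N \ s, β j := by
    rw [← sum_filter_ne_zero, add_comm, sum_sdiff hsN]
  have hrest : q * ∑ j ∈ N \ s, β j ≤ #(N \ s) * ∑ j ∈ s, β j := by
    rw [mul_sum]
    refine (sum_le_card_nsmul _ _ _ fun j hj => ?_).trans_eq (nsmul_eq_mul _ _)
    have := card_nsmul_le_sum s β (β j) fun i hi => htop i hi j (mem_sdiff.1 hj).2
    rwa [nsmul_eq_mul, hs] at this
  have hcard' : (#(N \ s) : ℝ) + q ≤ ρ := by exact_mod_cast hcard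
  calc ((min q ρ : ℕ) : ℝ) * ∑ j, β j
      = q * ∑ j ∈ s, β j + q * ∑ j ∈ N \ s, β j := by rw [hmin, hsplit, mul_add]
    _ ≤ (#(N \ s) + q) * ∑ j ∈ s, β j := by linarith
    _ ≤ ρ * ∑ j ∈ s, β j := mul_le_mul_of_nonneg_right hcard' hs0

def gammaVec (ρ : ℕ) (a d : ℝ) (j : ℕ) : ℝ :=
  if j = 0 then 0 else if j ≤ ρ then d - a else d

theorem sum_range_succ_gammaVec (ρ q : ℕ) (a d : ℝ) :
    ∑ j ∈ range (q + 1), gammaVec ρ a d j = q * d - (min q ρ : ℕ) * a := by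
  induction q with
  | zero => simp [gammaVec]
  | succ q ih =>
    rw [sum_range_succ, ih, gammaVec, if_neg q.succ_ne_zero]
    split_ifs with h
    · rw [min_eq_left h, min_eq_left (by omega : q ≤ ρ)]
      push_cast
      ring
    · rw [min_eq_right (by omega : ρ ≤ q + 1), min_eq_right (by omega : ρ ≤ q)]
      push_cast
      ring

open Polynomial in
theorem LinearMap.charpoly_eq_prod_of_apply_basis_eq_smul {R M ι : Type*} [CommRing R]
    [AddCommGroup M] [Module R M] [Module.Free R M] [Module.Finite R M] [Fintype ι]
    [DecidableEq ι] (f : M →ₗ[R] M) (b : Module.Basis ι R M) (g : ι → R)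
    (hb : ∀ i, f (b i) = g i • b i) :
    f.charpoly = ∏ i, (X - C (g i)) := by
  rw [← f.charpoly_toMatrix b, ← Matrix.charpoly_diagonal]
  congr 1
  ext i j
  rw [LinearMap.toMatrix_apply, hb, map_smul, b.repr_self, Matrix.diagonal_apply]
  by_cases h : i = j
  · subst h; simp
  · simp [h]

open Polynomial in
theorem Matrix.IsHermitian.map_eigenvalues_eq_of_orthonormal {n : Type*} [Fintype n]
    [DecidableEq n] {A : Matrix n n ℝ} (hA : A.IsHermitian) {u : n → EuclideanSpace ℝ n}
    (hu : Orthonormal ℝ u) {g : n → ℝ} (hg : ∀ j, A *ᵥ u j = g j • u j) :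
    univ.val.map hA.eigenvalues = univ.val.map g := by
  have hli : LinearIndependent ℝ fun j => (u j : n → ℝ) :=
    hu.linearIndependent.map' (WithLp.linearEquiv 2 ℝ (n → ℝ)).toLinearMap (LinearEquiv.ker _)
  let b := basisOfLinearIndependentOfCardEqFinrank' _ hli (by simp)
  have h := hA.roots_charpoly_eq_eigenvalues
  rw [← charpoly_toLin',
    LinearMap.charpoly_eq_prod_of_apply_basis_eq_smul _ b g (by simpa [b] using hg)] at h
  simpa [roots_prod, X_sub_C_ne_zero, prod_ne_zero_iff] using h.symm

theorem Orthonormal.fin_cons {𝕜 E : Type*} [RCLike 𝕜] [NormedAddCommGroup E]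
    [InnerProductSpace 𝕜 E] {m : ℕ} {v : E} {u : Fin m → E} (hu : Orthonormal 𝕜 u)
    (hv : ‖v‖ = 1) (hvu : ∀ j, inner 𝕜 v (u j) = 0) :
    Orthonormal 𝕜 (Fin.cons v u : Fin (m + 1) → E) := by
  rw [orthonormal_iff_ite] at hu ⊢
  intro i j
  cases i using Fin.cases <;> cases j using Fin.cases <;>
    simp [hu, hvu, (Fin.succ_ne_zero _).symm, inner_eq_zero_symm.1 (hvu _),
      inner_self_eq_norm_sq_to_K, hv]

theorem LinearMap.IsSymmetric.exists_orthonormal_cons_eigenvectors {𝕜 E : Type*} [RCLike 𝕜]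
    [NormedAddCommGroup E] [InnerProductSpace 𝕜 E] {T : E →ₗ[𝕜] E} (hT : T.IsSymmetric)
    {m : ℕ} (hm : finrank 𝕜 E = m + 1) {v : E} (hv : ‖v‖ = 1) {c : 𝕜} (hTv : T v = c • v) :
    ∃ (u : Fin (m + 1) → E) (μ : Fin m → ℝ), Orthonormal 𝕜 u ∧ u 0 = v ∧
      ∀ j, T (u j.succ) = (μ j : 𝕜) • u j.succ := by
  have hv0 : v ≠ 0 := by rintro rfl; simp at hv
  have : Fact (finrank 𝕜 E = m + 1) := ⟨hm⟩
  have : FiniteDimensional 𝕜 E := .of_fact_finrank_eq_succ m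
  set W := (𝕜 ∙ v)ᗮ
  have hW : ∀ x ∈ W, T x ∈ W := fun x hx => by
    rw [Submodule.mem_orthogonal_singleton_iff_inner_right, ← hT, hTv, inner_smul_left,
      (Submodule.mem_orthogonal_singleton_iff_inner_right).1 hx, mul_zero]
  have hTW := hT.restrict_invariant hW
  have hWm : finrank 𝕜 W = m := Submodule.finrank_orthogonal_span_singleton hv0
  set b := hTW.eigenvectorBasis hWm
  refine ⟨Fin.cons v fun j => (b j : E), hTW.eigenvalues hWm, ?_, rfl, fun j => ?_⟩
  · refine (b.orthonormal.comp_linearIsometry W.subtypeₗᵢ).fin_cons hv fun j => ?_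
    exact Submodule.inner_right_of_mem_orthogonal (Submodule.mem_span_singleton_self v) (b j).2
  · exact congr_arg Subtype.val (hTW.apply_eigenvectorBasis hWm j)

noncomputable def centeringMatrix (n : ℕ) : Matrix (Fin n) (Fin n) ℝ :=
  1 - (1 / (n : ℝ)) • Matrix.of fun _ _ => 1

theorem centeringMatrix_mulVec {n : ℕ} (x : Fin n → ℝ) :
    centeringMatrix n *ᵥ x = x - fun _ => (∑ i, x i) / n := by
  rw [centeringMatrix, sub_mulVec, one_mulVec, smul_mulVec]
  ext i
  simp [mulVec, dotProduct, div_eq_inv_mul]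

theorem centeringMatrix_mulVec_of_sum_eq_zero {n : ℕ} {x : Fin n → ℝ} (hx : ∑ i, x i = 0) :
    centeringMatrix n *ᵥ x = x := by
  simp [centeringMatrix_mulVec, hx, ← Pi.zero_def]

theorem centeringMatrix_mulVec_const {n : ℕ} [NeZero n] (c : ℝ) :
    centeringMatrix n *ᵥ (fun _ => c) = 0 := by
  ext
  simp [centeringMatrix_mulVec, NeZero.ne]

theorem Matrix.IsHermitian.exists_orthonormal_eigenvectors_of_mulVec_one_eq_zero {m : ℕ}
    {A : Matrix (Fin (m + 1)) (Fin (m + 1)) ℝ} (hA : A.IsHermitian)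
    (hrow : A *ᵥ (fun _ => 1) = 0) :
    ∃ (u : Fin (m + 1) → EuclideanSpace ℝ (Fin (m + 1))) (c : ℝ) (μ : Fin m → ℝ),
      Orthonormal ℝ u ∧ (⇑(u 0) = fun _ => c) ∧
        ∀ j, ∑ i, u j.succ i = 0 ∧ A *ᵥ u j.succ = μ j • u j.succ := by
  set one : EuclideanSpace ℝ (Fin (m + 1)) := WithLp.toLp 2 fun _ => 1
  have hone : one ≠ 0 := by
    intro h
    simpa [one] using congr_arg (fun x : EuclideanSpace ℝ (Fin (m + 1)) => x 0) h
  have hAv : toEuclideanLin A (‖one‖⁻¹ • one) = (0 : ℝ) • (‖one‖⁻¹ • one) := by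
    simp [one, toLpLin_apply, hrow]
  obtain ⟨u, μ, hu, hu0, hAu⟩ :=
    (isSymmetric_toEuclideanLin_iff.2 hA).exists_orthonormal_cons_eigenvectors
      finrank_euclideanSpace_fin (norm_smul_inv_norm hone) hAv
  refine ⟨u, ‖one‖⁻¹, μ, hu, by ext; simp [hu0, one], fun j => ⟨?_, ?_⟩⟩
  · have h := hu.inner_eq_zero (Fin.succ_ne_zero j).symm
    simpa [hu0, one, PiLp.inner_apply, ← sum_mul, hone] using h
  · simpa [toLpLin_apply] using congr_arg WithLp.ofLp (hAu j)

theorem Finset.card_filter_univ_eq_of_map_univ_eq {ι κ α : Type*} [Fintype ι] [Fintype κ]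
    {f : ι → α} {g : κ → α} (h : univ.val.map f = univ.val.map g) (p : α → Prop)
    [DecidablePred p] : #{i | p (f i)} = #{j | p (g j)} := by
  have := congr_arg (fun s => Multiset.card (s.filter p)) h
  simp only [Multiset.filter_map, Multiset.card_map] at this
  exact this

theorem Matrix.PosSemidef.exists_spectrum_smul_centeringMatrix_sub {m : ℕ}
    {A : Matrix (Fin (m + 1)) (Fin (m + 1)) ℝ} (hA : A.PosSemidef)
    (hrow : A *ᵥ (fun _ => 1) = 0) :
    ∃ μ : Fin m → ℝ, (∀ j, 0 ≤ μ j) ∧ A.trace = ∑ j, μ j ∧ A.rank = #{j | μ j ≠ 0} ∧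
      ∀ (d : ℝ) (hC : (d • centeringMatrix (m + 1) - A).IsHermitian),
        univ.val.map hC.eigenvalues = univ.val.map (Fin.cons 0 fun j => d - μ j) := by
  obtain ⟨u, c, μ, hu, hu0, hsucc⟩ :=
    hA.1.exists_orthonormal_eigenvectors_of_mulVec_one_eq_zero hrow
  have hAu0 : A *ᵥ u 0 = 0 := by
    rw [hu0, show (fun _ => c) = c • fun _ : Fin (m + 1) => (1 : ℝ) by ext; simp, mulVec_smul,
      hrow, smul_zero]
  have hAu : ∀ j, A *ᵥ u j = (Fin.cons 0 μ : Fin (m + 1) → ℝ) j • u j :=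
    Fin.cases (by simpa using hAu0) fun j => by simpa using (hsucc j).2
  have hAeig := hA.1.map_eigenvalues_eq_of_orthonormal hu hAu
  refine ⟨μ, fun j => ?_, ?_, ?_, fun d hC =>
    hC.map_eigenvalues_eq_of_orthonormal hu (Fin.cases ?_ fun j => ?_)⟩
  · have : μ j ∈ univ.val.map hA.1.eigenvalues :=
      hAeig ▸ Multiset.mem_map.2 ⟨j.succ, mem_univ_val _, rfl⟩
    obtain ⟨i, -, hi⟩ := Multiset.mem_map.1 this
    exact hi ▸ hA.eigenvalues_nonneg i
  · rw [hA.1.trace_eq_sum_eigenvalues]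
    simpa [sum_eq_multiset_sum, Fin.sum_cons] using congr_arg Multiset.sum hAeig
  · rw [hA.1.rank_eq_card_non_zero_eigs, Fintype.card_subtype,
      card_filter_univ_eq_of_map_univ_eq hAeig (· ≠ 0), Fin.card_filter_univ_succ]
    simp
  · rw [hu0] at hAu0 ⊢
    simp [sub_mulVec, smul_mulVec, centeringMatrix_mulVec_const, hAu0]
  · simp [sub_mulVec, smul_mulVec, centeringMatrix_mulVec_of_sum_eq_zero (hsucc j).1,
      (hsucc j).2, sub_smul]

theorem stmt_8_general (n ρ : ℕ) (hρ0 : 0 < ρ) (hρn : ρ < n)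
    (A : Matrix (Fin n) (Fin n) ℝ) (hA : A.PosSemidef)
    (hrow : A.mulVec (fun _ => 1) = 0)
    (hrank : A.rank ≤ ρ) (T : ℝ) (htr : T ≤ A.trace)
    (a d : ℝ) (ha : a = T / ρ)
    (C : Matrix (Fin n) (Fin n) ℝ)
    (hC : C = d • ((1 : Matrix (Fin n) (Fin n) ℝ) -
        (1 / (n : ℝ)) • Matrix.of (fun _ _ => (1 : ℝ))) - A)
    (hCh : C.IsHermitian)
    (γ : Fin n → ℝ)
    (hγ : ∀ i : Fin n, γ i = if (i : ℕ) = 0 then 0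
        else if (i : ℕ) ≤ ρ then d - a else d) :
    ∀ k, k ≤ n →
      ∑ i ∈ Finset.univ.filter (fun i : Fin n => (i : ℕ) < k),
          (hCh.eigenvalues ∘ Tuple.sort hCh.eigenvalues) i ≤
        ∑ i ∈ Finset.univ.filter (fun i : Fin n => (i : ℕ) < k), γ i := by
  obtain ⟨m, rfl⟩ : ∃ m, n = m + 1 := ⟨n - 1, by omega⟩
  obtain ⟨μ, hμ, htrace, hrankμ, hspec⟩ := hA.exists_spectrum_smul_centeringMatrix_sub hrow
  obtain rfl : C = d • centeringMatrix (m + 1) - A := hC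
  set g : Fin (m + 1) → ℝ := Fin.cons 0 fun j => d - μ j
  rintro (_ | q) hk
  · simp
  obtain ⟨s, hs, hsμ⟩ :=
    exists_card_eq_min_mul_sum_le_mul_sum μ hμ (hrankμ ▸ hrank) (by simpa using hk)
  have hρ : (0 : ℝ) < ρ := by exact_mod_cast hρ0
  have htop : ((min q ρ : ℕ) : ℝ) * a ≤ ∑ j ∈ s, μ j :=
    calc ((min q ρ : ℕ) : ℝ) * a = (min q ρ : ℕ) * T / ρ := by rw [ha, mul_div_assoc]
      _ ≤ (min q ρ : ℕ) * (∑ j, μ j) / ρ := by rw [← htrace]; gcongr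
      _ ≤ ∑ j ∈ s, μ j := by rw [div_le_iff₀ hρ, mul_comm _ (ρ : ℝ)]; exact hsμ
  -- the eigenvalue `0` of `C` together with `d - μ j` for the `q` largest `μ j`
  set S : Finset (Fin (m + 1)) := cons 0 (s.map (Fin.succEmb m)) (by simp)
  have hS : #S = q + 1 := by rw [card_cons, card_map, hs]
  calc ∑ i ∈ univ.filter (fun i : Fin (m + 1) => (i : ℕ) < q + 1),
        (hCh.eigenvalues ∘ Tuple.sort hCh.eigenvalues) i
      = ∑ i ∈ univ.filter (fun i : Fin (m + 1) => (i : ℕ) < #S), (g ∘ Tuple.sort g) i := by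
        rw [Tuple.comp_sort_eq_of_map_univ_eq (hspec d hCh), hS]
    _ ≤ ∑ i ∈ S, g i := Tuple.sum_filter_val_lt_card_comp_sort_le_sum g S
    _ = q * d - ∑ j ∈ s, μ j := by simp [S, g, sum_map, sum_sub_distrib, hs]
    _ ≤ q * d - (min q ρ : ℕ) * a := by linarith
    _ = ∑ j ∈ range (q + 1), gammaVec ρ a d j := (sum_range_succ_gammaVec ρ q a d).symm
    _ = ∑ i ∈ univ.filter (fun i : Fin (m + 1) => (i : ℕ) < q + 1), γ i := by
        rw [sum_congr rfl fun i _ => hγ i]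
        exact (Fin.sum_univ_filter_val_lt hk (gammaVec ρ a d)).symm

/-- Lemma `gammaMbetter2`. If A is n×n PSD with zero row sums,
rank ≤ ρ and trace ≥ T, a = T/ρ, d ≥ a, and C = d·K_n − A with
K_n = I − (1/n)J, then the vector γ = (0, (d−a)^ρ, d^{n−1−ρ}) is weakly
majorized from above by the nondecreasing eigenvalue vector of C. -/
theorem stmt_8 (n ρ : ℕ) (hρ0 : 0 < ρ) (hρn : ρ < n)
    (A : Matrix (Fin n) (Fin n) ℝ) (hA : A.PosSemidef)
    (hrow : A.mulVec (fun _ => 1) = 0)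
    (hrank : A.rank ≤ ρ) (T : ℝ) (htr : T ≤ A.trace)
    (a d : ℝ) (ha : a = T / ρ) (had : a ≤ d)
    (C : Matrix (Fin n) (Fin n) ℝ)
    (hC : C = d • ((1 : Matrix (Fin n) (Fin n) ℝ) -
        (1 / (n : ℝ)) • Matrix.of (fun _ _ => (1 : ℝ))) - A)
    (hCh : C.IsHermitian)
    (γ : Fin n → ℝ)
    (hγ : ∀ i : Fin n, γ i = if (i : ℕ) = 0 then 0
        else if (i : ℕ) ≤ ρ then d - a else d) :
    ∀ k, k ≤ n →
      ∑ i ∈ Finset.univ.filter (fun i : Fin n => (i : ℕ) < k),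
          (hCh.eigenvalues ∘ Tuple.sort hCh.eigenvalues) i ≤
        ∑ i ∈ Finset.univ.filter (fun i : Fin n => (i : ℕ) < k), γ i :=
  stmt_8_general n ρ hρ0 hρn A hA hrow hrank T htr a d ha C hC hCh γ hγ
end

section
/- Let s ≡ 3 (mod 4) be a prime power and F the field of order s. Let C_0 be the set of nonzero squares and C_1 the set of nonzero non-squares of F. Define W = {x ∈ C_0 : 1 − x² ∈ C_0}. Then |W| = (s−3)/4. -/
/-!
Count the points (x, y) of the unit circle x² + y² = 1 with x, y ≠ 0 in two ways.
By x: each x ≠ 0 with 1 − x² a nonzero square gives two values of y, and since −1 is not a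
square, exactly one of ±x is a square; so there are 4|W| such points.
By the rational parametrization t ↦ ((1 − t²)/(1 + t²), 2t/(1 + t²)), which is defined on all of
F because 1 + t² ≠ 0, and which maps F \ {0, 1, −1} bijectively onto these points: so there are
s − 3 of them.
-/

open Finset

section
variable {F : Type*} [Field F]

theorem two_ne_zero_of_not_isSquare_neg_one (hF : ¬IsSquare (-1 : F)) : (2 : F) ≠ 0 :=
  fun h ↦ hF ⟨1, by linear_combination -h⟩

theorem one_add_sq_ne_zero_of_not_isSquare_neg_one (hF : ¬IsSquare (-1 : F)) (t : F) :
    1 + t ^ 2 ≠ 0 :=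
  fun h ↦ hF ⟨t, by linear_combination -h⟩

theorem one_add_ne_zero_of_sq_add_sq_eq_one {x y : F} (hy : y ≠ 0) (h : x ^ 2 + y ^ 2 = 1) :
    1 + x ≠ 0 :=
  fun hx ↦ hy <| pow_eq_zero_iff two_ne_zero |>.mp <| by linear_combination h - (x - 1) * hx

def circleParam (t : F) : F × F := ((1 - t ^ 2) / (1 + t ^ 2), 2 * t / (1 + t ^ 2))

theorem circleParam_snd_div_one_add_fst (h2 : (2 : F) ≠ 0) {t : F} (ht : 1 + t ^ 2 ≠ 0) :
    (circleParam t).2 / (1 + (circleParam t).1) = t := by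
  have hsum : 1 + (1 - t ^ 2) / (1 + t ^ 2) = 2 / (1 + t ^ 2) := by
    field_simp
    ring
  rw [circleParam, hsum]
  field_simp

theorem circleParam_div_one_add (h2 : (2 : F) ≠ 0) {x y : F} (h : x ^ 2 + y ^ 2 = 1)
    (hx : 1 + x ≠ 0) : circleParam (y / (1 + x)) = (x, y) := by
  have hplus : 1 + (y / (1 + x)) ^ 2 = 2 / (1 + x) := by
    field_simp
    linear_combination h
  have hminus : 1 - (y / (1 + x)) ^ 2 = 2 * x / (1 + x) := by
    field_simp
    linear_combination -h
  rw [circleParam, hplus, hminus, Prod.ext_iff]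
  constructor <;> field_simp

variable [Fintype F] [DecidableEq F]

theorem isSquare_neg_iff_not_isSquare (hF : ¬IsSquare (-1 : F)) {x : F} (hx : x ≠ 0) :
    IsSquare (-x) ↔ ¬IsSquare x := by
  constructor
  · rintro ⟨b, hb⟩ ⟨a, rfl⟩
    have ha : a ≠ 0 := by rintro rfl; simp at hx
    exact hF ⟨b / a, by field_simp; linear_combination hb⟩
  · intro hx'
    rw [← quadraticChar_one_iff_isSquare (neg_ne_zero.mpr hx), neg_eq_neg_one_mul, map_mul,
      quadraticChar_neg_one_iff_not_isSquare.mpr hF,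
      quadraticChar_neg_one_iff_not_isSquare.mpr hx']
    norm_num

theorem card_ne_zero_comp_sq_eq_two_mul_card_isSquare (hF : ¬IsSquare (-1 : F))
    (P : F → Prop) [DecidablePred P] :
    #{x : F | x ≠ 0 ∧ P (x ^ 2)} = 2 * #{x : F | (x ≠ 0 ∧ IsSquare x) ∧ P (x ^ 2)} := by
  have hnonsq : #{x : F | (x ≠ 0 ∧ ¬IsSquare x) ∧ P (x ^ 2)}
      = #{x : F | (x ≠ 0 ∧ IsSquare x) ∧ P (x ^ 2)} := by
    refine card_nbij' (- ·) (- ·) ?_ ?_ (fun x _ ↦ neg_neg x) (fun x _ ↦ neg_neg x) <;>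
    · intro x hx
      simp only [mem_coe, mem_filter, mem_univ, true_and, neg_sq, neg_ne_zero] at hx ⊢
      simp [isSquare_neg_iff_not_isSquare hF hx.1.1, hx]
  rw [two_mul]
  nth_rw 2 [← hnonsq]
  rw [← card_filter_add_card_filter_not (fun x : F ↦ IsSquare x)]
  simp only [filter_filter]
  congr 2 <;> ext x <;> simp only [mem_filter, mem_univ, true_and] <;> tauto

theorem card_nonzero_sqrts (h2 : (2 : F) ≠ 0) (c : F) :
    #{y : F | y ≠ 0 ∧ y ^ 2 = c} = if c ≠ 0 ∧ IsSquare c then 2 else 0 := by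
  split_ifs with hc
  · obtain ⟨hc0, b, rfl⟩ := hc
    have hb : b ≠ 0 := by rintro rfl; simp at hc0
    have hroots : ({y : F | y ≠ 0 ∧ y ^ 2 = b * b} : Finset F) = {b, -b} := by
      ext y
      simp only [mem_filter, mem_univ, true_and, mem_insert, mem_singleton, ← sq,
        sq_eq_sq_iff_eq_or_eq_neg]
      exact ⟨And.right, by rintro (rfl | rfl) <;> simp [hb]⟩
    rw [hroots, card_pair]
    intro h
    exact hb ((mul_eq_zero.mp (show 2 * b = 0 by linear_combination h)).resolve_left h2)
  · rw [card_eq_zero, filter_eq_empty_iff]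
    rintro y - ⟨hy, rfl⟩
    exact hc ⟨pow_ne_zero 2 hy, y, sq y⟩

variable (F) in
def unitCircleOffAxis : Finset (F × F) := {p | p.1 ≠ 0 ∧ p.2 ≠ 0 ∧ p.1 ^ 2 + p.2 ^ 2 = 1}

theorem card_unitCircleOffAxis_eq_two_mul (h2 : (2 : F) ≠ 0) :
    #(unitCircleOffAxis F) = 2 * #{x : F | x ≠ 0 ∧ (1 - x ^ 2 ≠ 0 ∧ IsSquare (1 - x ^ 2))} := by
  have hfiber (x : F) : #{y : F | x ≠ 0 ∧ y ≠ 0 ∧ x ^ 2 + y ^ 2 = 1}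
      = if x ≠ 0 ∧ (1 - x ^ 2 ≠ 0 ∧ IsSquare (1 - x ^ 2)) then 2 else 0 := by
    by_cases hx : x = 0
    · simp [hx]
    · simp only [ne_eq, hx, not_false_eq_true, true_and, ← card_nonzero_sqrts h2,
        eq_sub_iff_add_eq']
  rw [unitCircleOffAxis, card_filter, Fintype.sum_prod_type, card_filter, mul_sum]
  refine sum_congr rfl fun x _ ↦ ?_
  rw [← card_filter, hfiber]
  split_ifs <;> rfl

theorem card_unitCircleOffAxis (hF : ¬IsSquare (-1 : F)) :
    #(unitCircleOffAxis F) = Fintype.card F - 3 := by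
  have h2 := two_ne_zero_of_not_isSquare_neg_one hF
  have hcard : #(univ \ {0, 1, -1} : Finset F) = Fintype.card F - 3 := by
    rw [card_univ_sdiff, card_insert_of_notMem (by simp),
      card_pair fun h ↦ h2 (by linear_combination h)]
  rw [← hcard]
  symm
  refine card_nbij' circleParam (fun p ↦ p.2 / (1 + p.1)) ?_ ?_ ?_ ?_ <;>
  simp only [Set.MapsTo, Set.LeftInvOn, unitCircleOffAxis, mem_coe, mem_sdiff, mem_filter,
    mem_univ, mem_insert, mem_singleton, true_and, not_or]
  · rintro t ⟨ht0, ht1, htn⟩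
    have hd := one_add_sq_ne_zero_of_not_isSquare_neg_one hF t
    refine ⟨div_ne_zero ?_ hd, div_ne_zero (mul_ne_zero h2 ht0) hd, ?_⟩
    · intro h
      rcases mul_eq_zero.mp (show (1 - t) * (1 + t) = 0 by linear_combination h) with h | h
      · exact ht1 (by linear_combination -h)
      · exact htn (by linear_combination h)
    · simp only [circleParam]
      field_simp
      ring
  · rintro ⟨x, y⟩ ⟨hx, hy, hxy⟩
    have hx1 := one_add_ne_zero_of_sq_add_sq_eq_one hy hxy
    have hx0 (c : F) (hc : c ^ 2 = 1) (h : y / (1 + x) = c) : False := by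
      rw [div_eq_iff hx1] at h
      have : 2 * x * (1 + x) = 0 := by
        linear_combination hxy - (y + c * (1 + x)) * h - (1 + x) ^ 2 * hc
      simp [h2, hx, hx1] at this
    exact ⟨div_ne_zero hy hx1, hx0 1 (one_pow 2), hx0 (-1) (by norm_num)⟩
  · exact fun t _ ↦
      circleParam_snd_div_one_add_fst h2 (one_add_sq_ne_zero_of_not_isSquare_neg_one hF t)
  · rintro ⟨x, y⟩ ⟨-, hy, hxy⟩
    exact circleParam_div_one_add h2 hxy (one_add_ne_zero_of_sq_add_sq_eq_one hy hxy)

end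

/-- Let F be a finite field with card F ≡ 3 (mod 4), C₀ the set of
nonzero squares. Then W = {x ∈ C₀ : 1 − x² ∈ C₀} has cardinality (card F − 3)/4. -/
theorem stmt_11 (F : Type*) [Field F] [Fintype F]
    (h4 : Fintype.card F % 4 = 3) :
    {x : F | (x ≠ 0 ∧ IsSquare x) ∧ (1 - x ^ 2 ≠ 0 ∧ IsSquare (1 - x ^ 2))}.ncard =
      (Fintype.card F - 3) / 4 := by
  classical
  have hF : ¬IsSquare (-1 : F) := fun h ↦ FiniteField.isSquare_neg_one_iff.mp h h4
  have hW : 4 * #{x : F | (x ≠ 0 ∧ IsSquare x) ∧ (1 - x ^ 2 ≠ 0 ∧ IsSquare (1 - x ^ 2))}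
      = Fintype.card F - 3 := by
    rw [← card_unitCircleOffAxis hF,
      card_unitCircleOffAxis_eq_two_mul (two_ne_zero_of_not_isSquare_neg_one hF),
      card_ne_zero_comp_sq_eq_two_mul_card_isSquare hF (fun u ↦ 1 - u ≠ 0 ∧ IsSquare (1 - u))]
    ring
  rw [← Set.ncard_coe_finset] at hW
  simp only [coe_filter, mem_univ, true_and] at hW
  omega
end

section
/- Let s ≡ 3 (mod 4) be a prime power, F the field of order s, C_0 the nonzero squares and C_1 the nonzero non-squares. Let W = {x ∈ C_0 : 1−x² ∈ C_0} and define f : W → C_1 by f(x) = −1/x. Then: (a) f maps W bijectively onto {x ∈ C_1 : 1−x² ∈ C_1}; (b) for every ξ ∈ W, (ξ − 1)(f(ξ) − 1) ∈ C_0; (c) for all ξ ≠ ξ′ in W, (ξ − ξ′)(f(ξ) − f(ξ′)) ∈ C_0. -/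
/-!
In a finite field a product of two non-squares is a square, so when `-1` is not a square,
negation, and hence `x ↦ -x⁻¹`, swaps the nonzero squares with the non-squares. The identity
`1 - (-x⁻¹)² = -(1 - x²) · x⁻²` shows that this involution also flips the class of `1 - x²`, so it
exchanges `W` and `W̃`. Parts (b) and (c) follow from `(ξ - 1)(-ξ⁻¹ - 1) = (1 - ξ²) ξ⁻¹` and
`(ξ - ξ')(-ξ⁻¹ + ξ'⁻¹) = (ξ - ξ')² (ξ ξ')⁻¹`, both products of squares when `ξ, ξ' ∈ W`.
-/

section

variable {F : Type*} [Field F]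

theorem FiniteField.isSquare_mul_of_not_isSquare [Fintype F] {a b : F}
    (ha : ¬IsSquare a) (hb : ¬IsSquare b) : IsSquare (a * b) := by
  classical
  have ha0 : a ≠ 0 := by rintro rfl; exact ha IsSquare.zero
  have hb0 : b ≠ 0 := by rintro rfl; exact hb IsSquare.zero
  rw [← quadraticChar_one_iff_isSquare (mul_ne_zero ha0 hb0), map_mul,
    quadraticChar_neg_one_iff_not_isSquare.2 ha, quadraticChar_neg_one_iff_not_isSquare.2 hb]
  norm_num

theorem FiniteField.isSquare_neg_iff_not_isSquare [Fintype F] (h : ¬IsSquare (-1 : F)) {a : F}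
    (ha : a ≠ 0) : IsSquare (-a) ↔ ¬IsSquare a := by
  refine ⟨fun hna hsa => h ?_, fun hsa => by simpa using isSquare_mul_of_not_isSquare h hsa⟩
  simpa [ha] using hna.div hsa

theorem isSquare_mul_sq_iff {a b : F} (hb : b ≠ 0) : IsSquare (a * b ^ 2) ↔ IsSquare a :=
  ⟨fun h => by simpa [hb] using h.div (IsSquare.sq b), fun h => h.mul (IsSquare.sq b)⟩

theorem one_sub_neg_inv_sq {x : F} (hx : x ≠ 0) : 1 - (-x⁻¹) ^ 2 = -(1 - x ^ 2) * x⁻¹ ^ 2 := by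
  field_simp
  ring

theorem sub_one_mul_neg_inv_sub_one {x : F} (hx : x ≠ 0) :
    (x - 1) * (-x⁻¹ - 1) = (1 - x ^ 2) * x⁻¹ := by
  field_simp
  ring

theorem sub_mul_neg_inv_sub_neg_inv {x y : F} (hx : x ≠ 0) (hy : y ≠ 0) :
    (x - y) * (-x⁻¹ - -y⁻¹) = (x - y) ^ 2 * (x * y)⁻¹ := by
  field_simp
  ring

theorem FiniteField.neg_inv_swaps_squareClasses [Fintype F] (h : ¬IsSquare (-1 : F)) {x : F}
    (hx : x ≠ 0) (hx1 : 1 - x ^ 2 ≠ 0) :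
    (-x⁻¹ ≠ 0 ∧ (IsSquare (-x⁻¹) ↔ ¬IsSquare x)) ∧
      (1 - (-x⁻¹) ^ 2 ≠ 0 ∧ (IsSquare (1 - (-x⁻¹) ^ 2) ↔ ¬IsSquare (1 - x ^ 2))) := by
  have hinv : x⁻¹ ≠ 0 := inv_ne_zero hx
  rw [isSquare_neg_iff_not_isSquare h hinv, isSquare_inv, one_sub_neg_inv_sq hx,
    isSquare_mul_sq_iff hinv, isSquare_neg_iff_not_isSquare h hx1]
  exact ⟨⟨neg_ne_zero.2 hinv, Iff.rfl⟩,
    mul_ne_zero (neg_ne_zero.2 hx1) (pow_ne_zero _ hinv), Iff.rfl⟩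

end

/-- Lemma `factorsInW`. Let F be a finite field with
card F ≡ 3 (mod 4), C₀ the nonzero squares, C₁ the nonzero non-squares,
W = {x ∈ C₀ : 1 − x² ∈ C₀}, W̃ = {x ∈ C₁ : 1 − x² ∈ C₁} and f(x) = −x⁻¹. Then
(a) f maps W bijectively onto W̃ (a subset of C₁);
(b) for every ξ ∈ W, (ξ−1)(f(ξ)−1) ∈ C₀;
(c) for ξ ≠ ξ′ in W, (ξ−ξ′)(f(ξ)−f(ξ′)) ∈ C₀. -/
theorem stmt_12 (F : Type*) [Field F] [Fintype F]
    (h4 : Fintype.card F % 4 = 3)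
    (C0 C1 W Wt : Set F) (f : F → F)
    (hC0 : C0 = {x : F | x ≠ 0 ∧ IsSquare x})
    (hC1 : C1 = {x : F | x ≠ 0 ∧ ¬ IsSquare x})
    (hW : W = {x ∈ C0 | 1 - x ^ 2 ∈ C0})
    (hWt : Wt = {x ∈ C1 | 1 - x ^ 2 ∈ C1})
    (hf : ∀ x, f x = -x⁻¹) :
    (Set.BijOn f W Wt ∧ Wt ⊆ C1) ∧
      (∀ ξ ∈ W, (ξ - 1) * (f ξ - 1) ∈ C0) ∧
      (∀ ξ ∈ W, ∀ ξ' ∈ W, ξ ≠ ξ' → (ξ - ξ') * (f ξ - f ξ') ∈ C0) := by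
  subst hC0 hC1 hW hWt
  obtain rfl : f = fun x => -x⁻¹ := funext hf
  have h1 : ¬IsSquare (-1 : F) := by simp [FiniteField.isSquare_neg_one_iff, h4]
  refine ⟨⟨Set.InvOn.bijOn (f' := fun x => -x⁻¹) ⟨fun x _ => by simp, fun x _ => by simp⟩ ?_ ?_,
    fun x hx => hx.1⟩, ?_, ?_⟩
  iterate 2
    rintro x ⟨⟨hx0, hx⟩, hx10, hx1⟩
    have hswap := FiniteField.neg_inv_swaps_squareClasses h1 hx0 hx10
    exact ⟨⟨hswap.1.1, by tauto⟩, hswap.2.1, by tauto⟩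
  · rintro ξ ⟨⟨hξ0, hξ⟩, hξ10, hξ1⟩
    rw [sub_one_mul_neg_inv_sub_one hξ0]
    exact ⟨mul_ne_zero hξ10 (inv_ne_zero hξ0), hξ1.mul hξ.inv⟩
  · rintro ξ ⟨⟨hξ0, hξ⟩, -⟩ ξ' ⟨⟨hξ'0, hξ'⟩, -⟩ hne
    rw [sub_mul_neg_inv_sub_neg_inv hξ0 hξ'0]
    exact ⟨mul_ne_zero (pow_ne_zero _ (sub_ne_zero.2 hne)) (inv_ne_zero (mul_ne_zero hξ0 hξ'0)),
      (IsSquare.sq _).mul (hξ.mul hξ').inv⟩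
end

section
/- Let s ≡ 3 (mod 4) be a prime power, with W and W̃ = {x ∈ C_1 : 1−x² ∈ C_1} as above. Then the map x ↦ −x is a bijection from W = {x ∈ C_0 : 1−x² ∈ C_0} onto (C_1 \ W̃) \ {−1}, and consequently |W| + |W̃| = (s−3)/2. -/
/-! As `s ≡ 3 (mod 4)`, `-1` is a non-square, so `x ↦ -x` swaps `C₀` and `C₁` (whence
`|C₁| = (s - 1)/2`). Since `(-x)² = x²`, it carries `W` onto the non-squares `y` for which `1 - y²`
is a nonzero square, i.e. onto `C₁ \ W̃` minus `y = -1`, the only non-square root of `1 - y²`.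
So `C₁ \ {-1}` is the disjoint union of `W̃` and `-W`, and `|W| + |W̃| = |C₁| - 1`. -/

namespace FiniteField

variable {F : Type*} [Field F]

variable (F) in
def nonzeroSquares : Set F := {x | x ≠ 0 ∧ IsSquare x}

variable (F) in
def nonsquares : Set F := {x | x ≠ 0 ∧ ¬IsSquare x}

theorem nonzeroSquares_union_nonsquares : nonzeroSquares F ∪ nonsquares F = {0}ᶜ := by
  ext x
  simp only [nonzeroSquares, nonsquares, Set.mem_union, Set.mem_ofPred_eq, Set.mem_compl_iff,
    Set.mem_singleton_iff]
  tauto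

theorem disjoint_nonzeroSquares_nonsquares : Disjoint (nonzeroSquares F) (nonsquares F) :=
  Set.disjoint_left.mpr fun _ hsq hns => hns.2 hsq.2

theorem mem_nonzeroSquares_iff_ne_zero_and_notMem_nonsquares (x : F) :
    x ∈ nonzeroSquares F ↔ x ≠ 0 ∧ x ∉ nonsquares F := by
  simp only [nonzeroSquares, nonsquares, Set.mem_ofPred_eq]
  tauto

variable [Fintype F]

theorem isSquare_neg_iff_not_isSquare_s13 (h : ¬IsSquare (-1 : F)) {x : F} (hx : x ≠ 0) :
    IsSquare (-x) ↔ ¬IsSquare x := by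
  classical
  have hneg : quadraticChar F (-x) = -quadraticChar F x := by
    rw [neg_eq_neg_one_mul, map_mul, quadraticChar_neg_one_iff_not_isSquare.mpr h, neg_one_mul]
  rw [← quadraticChar_one_iff_isSquare (neg_ne_zero.mpr hx),
    ← quadraticChar_neg_one_iff_not_isSquare, hneg, neg_eq_iff_eq_neg]

theorem neg_mem_nonsquares_iff (h : ¬IsSquare (-1 : F)) {x : F} :
    -x ∈ nonsquares F ↔ x ∈ nonzeroSquares F := by
  simp only [nonsquares, nonzeroSquares, Set.mem_ofPred_eq, neg_ne_zero]
  by_cases hx : x = 0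
  · simp [hx]
  · simp [hx, isSquare_neg_iff_not_isSquare_s13 h hx]

theorem two_mul_ncard_nonsquares (h : ¬IsSquare (-1 : F)) :
    2 * (nonsquares F).ncard = Fintype.card F - 1 := by
  have hneg : (nonzeroSquares F).ncard = (nonsquares F).ncard :=
    ((Equiv.neg F).bijOn fun _ => neg_mem_nonsquares_iff h).ncard_eq
  have hunion := Set.ncard_union_eq (disjoint_nonzeroSquares_nonsquares (F := F))
  rw [nonzeroSquares_union_nonsquares, Set.ncard_compl, Set.ncard_singleton,
    Nat.card_eq_fintype_card] at hunion
  omega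

theorem neg_mem_nonsquares_diff_iff (h : ¬IsSquare (-1 : F)) {x : F} :
    -x ∈ (nonsquares F \ {y ∈ nonsquares F | 1 - y ^ 2 ∈ nonsquares F}) \ {-1} ↔
      x ∈ {y ∈ nonzeroSquares F | 1 - y ^ 2 ∈ nonzeroSquares F} := by
  simp only [Set.mem_sdiff, Set.mem_ofPred_eq, Set.mem_singleton_iff, neg_sq, neg_inj,
    neg_mem_nonsquares_iff h]
  by_cases hx : x ∈ nonzeroSquares F
  · have hx1 : 1 - x ^ 2 = 0 ↔ x = 1 := by
      have : x ≠ -1 := fun hx' => h (hx' ▸ hx.2)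
      rw [sub_eq_zero, eq_comm, sq_eq_one_iff]
      tauto
    rw [mem_nonzeroSquares_iff_ne_zero_and_notMem_nonsquares (1 - x ^ 2), ← hx1]
    tauto
  · simp [hx]

theorem bijOn_neg_nonzeroSquares_oneSubSq (h : ¬IsSquare (-1 : F)) :
    Set.BijOn (fun x => -x) {y ∈ nonzeroSquares F | 1 - y ^ 2 ∈ nonzeroSquares F}
      ((nonsquares F \ {y ∈ nonsquares F | 1 - y ^ 2 ∈ nonsquares F}) \ {-1}) :=
  (Equiv.neg F).bijOn fun _ => neg_mem_nonsquares_diff_iff h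

end FiniteField

open FiniteField in
/-- Let F be a finite field with card F ≡ 3 (mod 4), C₀ the
nonzero squares, C₁ the nonzero non-squares, W = {x ∈ C₀ : 1−x² ∈ C₀} and
W̃ = {x ∈ C₁ : 1−x² ∈ C₁}. Then x ↦ −x is a bijection from W onto
(C₁ \ W̃) \ {−1}, and |W| + |W̃| = (card F − 3)/2. -/
theorem stmt_13 (F : Type*) [Field F] [Fintype F]
    (h4 : Fintype.card F % 4 = 3)
    (C0 C1 W Wt : Set F)
    (hC0 : C0 = {x : F | x ≠ 0 ∧ IsSquare x})
    (hC1 : C1 = {x : F | x ≠ 0 ∧ ¬ IsSquare x})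
    (hW : W = {x ∈ C0 | 1 - x ^ 2 ∈ C0})
    (hWt : Wt = {x ∈ C1 | 1 - x ^ 2 ∈ C1}) :
    Set.BijOn (fun x => -x) W ((C1 \ Wt) \ {-1}) ∧
      W.ncard + Wt.ncard = (Fintype.card F - 3) / 2 := by
  obtain rfl : C0 = nonzeroSquares F := hC0
  obtain rfl : C1 = nonsquares F := hC1
  subst hW hWt
  have hm1 : ¬IsSquare (-1 : F) := by rw [isSquare_neg_one_iff]; omega
  have hbij := bijOn_neg_nonzeroSquares_oneSubSq hm1
  refine ⟨hbij, ?_⟩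
  have hWt_sub : {y ∈ nonsquares F | 1 - y ^ 2 ∈ nonsquares F} ⊆ nonsquares F \ {-1} :=
    fun y hy => ⟨hy.1, by rintro rfl; simp [nonsquares] at hy⟩
  have hsplit := Set.ncard_sdiff_add_ncard_of_subset hWt_sub
  rw [Set.sdiff_sdiff_comm, ← hbij.ncard_eq, Set.ncard_sdiff_singleton_of_mem
    ((neg_mem_nonsquares_iff hm1).mpr ⟨one_ne_zero, IsSquare.one⟩)] at hsplit
  have hC1 := two_mul_ncard_nonsquares hm1
  omega
end

section
/- Let s = ht + 1 be a prime power, v = hs, r = t, and let C* be the v×v symmetric matrix C* = r·K_v − (1/s)·L·Lᵀ − (1/(s(s−h)))·(J_h ⊗ K_s) + (h r²/s²)·J_v, where L = ((L_{i−j}))_{i,j ∈ I_h} is the block-circulant matrix built from the coset-difference matrices L_i (L_i(x,y) = 1 iff y−x ∈ C_i). Then the spectrum of C* is: eigenvalue r with multiplicity h−1, eigenvalue r − 1/(s−h) with multiplicity s−1, eigenvalue r−1 with multiplicity (h−1)(s−1), and eigenvalue 0 with multiplicity 1. -/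
/-!
Write `E_n = J_n / n` and `K_n = I_n - E_n`. The (x, y)-entry of the (i, j) block of `L Lᵀ`
counts the `z ∉ {x, y}` with `(z - x) / (z - y) ∈ C_{i-j}`; since `z ↦ (z - x) / (z - y)` is a
Möbius transformation carrying `F \ {x, y}` onto `F \ {0, 1}`, this count is `t - [i = j]`
when `x ≠ y`. Hence `L Lᵀ = t J ⊗ J - t J ⊗ I - I ⊗ J + s I`, and `C*` becomes a combination
of the four commuting projections `E_h ⊗ E_s`, `E_h ⊗ K_s`, `K_h ⊗ E_s`, `K_h ⊗ K_s`, of ranks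
`1`, `s - 1`, `h - 1`, `(h - 1)(s - 1)`, with coefficients `0`, `r - 1/(s - h)`, `r`, `r - 1`.
The Kronecker product of eigenbases of `J_h` and `J_s` (the all-ones vector and the vectors
`e_z - e_j`) diagonalizes all four projections at once.
-/

open Matrix Polynomial Kronecker Finset
open scoped Classical

noncomputable section

namespace CosetDesign

section Diagonalization

theorem charpoly_eq_prod_of_mul_eq_mul_diagonal {R n : Type*} [CommRing R] [Fintype n]
    [DecidableEq n] {M P Q : Matrix n n R} {d : n → R} (hPQ : P * Q = 1)
    (hMP : M * P = P * diagonal d) :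
    M.charpoly = ∏ i, (X - C (d i)) := by
  have hM : M = P * (diagonal d * Q) := by rw [← mul_assoc, ← hMP, mul_assoc, hPQ, mul_one]
  rw [hM, charpoly_mul_comm, mul_assoc, mul_eq_one_comm.mp hPQ, mul_one, charpoly_diagonal]

theorem prod_ite_eq_mul_pow {α M : Type*} [Fintype α] [DecidableEq α] [CommMonoid M] (z : α)
    (A B : M) : ∏ x, (if x = z then A else B) = A * B ^ (Fintype.card α - 1) := by
  rw [Fintype.prod_eq_mul_prod_compl z, if_pos rfl,
    prod_congr rfl fun x hx => if_neg (mem_compl.mp hx ∘ mem_singleton.mpr), prod_const,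
    card_compl, card_singleton]

variable {K α β : Type*} [Field K] [Fintype α] [Fintype β]

variable (K α) in
def averaging : Matrix α α K := (Fintype.card α : K)⁻¹ • of fun _ _ => 1

variable [DecidableEq α] [DecidableEq β]

variable (K α) in
def centering : Matrix α α K := 1 - averaging K α

def onesEigenbasis (z : α) : Matrix α α K :=
  of fun i j => if j = z then 1 else (Pi.single z 1 - Pi.single j 1 : α → K) i

def onesEigenbasisInv (z : α) : Matrix α α K :=
  of fun j i => (Fintype.card α : K)⁻¹ - if j ≠ z ∧ i = j then 1 else 0

theorem sum_onesEigenbasis_apply (z j : α) :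
    ∑ i, onesEigenbasis (K := K) z i j = if j = z then (Fintype.card α : K) else 0 := by
  by_cases hj : j = z <;> simp [onesEigenbasis, hj]

theorem onesEigenbasisInv_mul [CharZero K] [Nonempty α] (z : α) :
    onesEigenbasisInv (K := K) z * onesEigenbasis z = 1 := by
  have hcard : (Fintype.card α : K) ≠ 0 := Nat.cast_ne_zero.mpr Fintype.card_ne_zero
  ext j k
  simp only [onesEigenbasisInv, mul_apply, of_apply, sub_mul, sum_sub_distrib, ← mul_sum,
    sum_onesEigenbasis_apply, ite_mul, one_mul, zero_mul, ite_and]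
  by_cases hk : k = z <;> by_cases hj : j = z <;> by_cases hjk : j = k <;>
    simp_all [onesEigenbasis, one_apply, Pi.single_apply]

theorem averaging_mul_onesEigenbasis [CharZero K] [Nonempty α] (z : α) :
    averaging K α * onesEigenbasis z = onesEigenbasis z * diagonal (Pi.single z 1) := by
  have hcard : (Fintype.card α : K) ≠ 0 := Nat.cast_ne_zero.mpr Fintype.card_ne_zero
  ext i j
  rw [averaging, Matrix.smul_mul, Matrix.smul_apply, mul_apply, mul_diagonal]
  simp only [of_apply, one_mul, sum_onesEigenbasis_apply, smul_eq_mul, Pi.single_apply]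
  by_cases hj : j = z <;> simp [hj, hcard, onesEigenbasis]

theorem centering_mul_onesEigenbasis [CharZero K] [Nonempty α] (z : α) :
    centering K α * onesEigenbasis z = onesEigenbasis z * diagonal (1 - Pi.single z 1) := by
  have hdiag : diagonal (1 - Pi.single z 1 : α → K) = 1 - diagonal (Pi.single z 1) := by
    rw [← diagonal_one, diagonal_sub]
    rfl
  rw [centering, sub_mul, averaging_mul_onesEigenbasis, hdiag, mul_sub, one_mul, mul_one]

theorem kronecker_mul_kronecker_of_mul_eq_mul_diagonal {A P : Matrix α α K}
    {B Q : Matrix β β K} {a : α → K} {b : β → K} (hA : A * P = P * diagonal a)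
    (hB : B * Q = Q * diagonal b) :
    (A ⊗ₖ B) * (P ⊗ₖ Q) = (P ⊗ₖ Q) * diagonal fun p => a p.1 * b p.2 := by
  rw [← mul_kronecker_mul, hA, hB, mul_kronecker_mul, diagonal_kronecker_diagonal]

theorem charpoly_averaging_centering_kronecker [CharZero K] [Nonempty α] [Nonempty β]
    (a b c d : K) :
    (a • (averaging K α ⊗ₖ averaging K β) + b • (averaging K α ⊗ₖ centering K β)
      + c • (centering K α ⊗ₖ averaging K β) + d • (centering K α ⊗ₖ centering K β)).charpoly
    = (X - C a) * (X - C b) ^ (Fintype.card β - 1) * (X - C c) ^ (Fintype.card α - 1)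
      * (X - C d) ^ ((Fintype.card α - 1) * (Fintype.card β - 1)) := by
  obtain ⟨z⟩ := ‹Nonempty α›
  obtain ⟨w⟩ := ‹Nonempty β›
  have hPQ : (onesEigenbasis (K := K) z ⊗ₖ onesEigenbasis w) *
      (onesEigenbasisInv z ⊗ₖ onesEigenbasisInv w) = 1 := by
    rw [← mul_kronecker_mul, mul_eq_one_comm.mp (onesEigenbasisInv_mul z),
      mul_eq_one_comm.mp (onesEigenbasisInv_mul w), one_kronecker_one]
  rw [charpoly_eq_prod_of_mul_eq_mul_diagonal hPQ (d := fun p =>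
      if p.1 = z then (if p.2 = w then a else b) else (if p.2 = w then c else d))]
  · have hrow (i : α) : ∏ j, (X - C (if i = z then (if j = w then a else b)
        else (if j = w then c else d))) = if i = z then (X - C a) * (X - C b) ^ (Fintype.card β - 1)
        else (X - C c) * (X - C d) ^ (Fintype.card β - 1) := by
      split_ifs <;> simp only [apply_ite, prod_ite_eq_mul_pow]
    rw [Fintype.prod_prod_type, prod_congr rfl fun i _ => hrow i, prod_ite_eq_mul_pow, mul_pow,
      ← pow_mul]
    ring
  · have hav := averaging_mul_onesEigenbasis (K := K) z
    have hce := centering_mul_onesEigenbasis (K := K) z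
    have hav' := averaging_mul_onesEigenbasis (K := K) w
    have hce' := centering_mul_onesEigenbasis (K := K) w
    simp only [add_mul, smul_mul_assoc, kronecker_mul_kronecker_of_mul_eq_mul_diagonal hav hav',
      kronecker_mul_kronecker_of_mul_eq_mul_diagonal hav hce',
      kronecker_mul_kronecker_of_mul_eq_mul_diagonal hce hav',
      kronecker_mul_kronecker_of_mul_eq_mul_diagonal hce hce', ← mul_smul_comm, ← mul_add,
      ← diagonal_smul, diagonal_add]
    congr 2
    ext ⟨i, j⟩
    by_cases hi : i = z <;> by_cases hj : j = w <;> simp [hi, hj]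

end Diagonalization

section CosetIndex

variable {G F : Type*} [AddCommGroup G] [Field F] (φ : Fˣ →* Multiplicative G)

def cosetIndex (x : F) : G := if hx : x = 0 then 0 else (φ (Units.mk0 x hx)).toAdd

theorem cosetIndex_coe (u : Fˣ) : cosetIndex φ (u : F) = (φ u).toAdd := by
  rw [cosetIndex, dif_neg u.ne_zero, Units.mk0_val]

theorem cosetIndex_one : cosetIndex φ (1 : F) = 0 := by
  simpa using cosetIndex_coe φ 1

theorem cosetIndex_mul {x y : F} (hx : x ≠ 0) (hy : y ≠ 0) :
    cosetIndex φ (x * y) = cosetIndex φ x + cosetIndex φ y := by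
  rw [cosetIndex, cosetIndex, cosetIndex, dif_neg hx, dif_neg hy, dif_neg (mul_ne_zero hx hy),
    ← toAdd_mul, ← map_mul, Units.mk0_mul]

theorem cosetIndex_div {x y : F} (hx : x ≠ 0) (hy : y ≠ 0) :
    cosetIndex φ (x / y) = cosetIndex φ x - cosetIndex φ y := by
  rw [eq_sub_iff_add_eq, ← cosetIndex_mul φ (div_ne_zero hx hy) hy, div_mul_cancel₀ x hy]

theorem mem_setOf_units_iff (d : G) (x : F) :
    x ∈ {x : F | ∃ u : Fˣ, (u : F) = x ∧ φ u = Multiplicative.ofAdd d} ↔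
      x ≠ 0 ∧ cosetIndex φ x = d := by
  constructor
  · rintro ⟨u, rfl, hu⟩
    exact ⟨u.ne_zero, by rw [cosetIndex_coe, hu, toAdd_ofAdd]⟩
  · rintro ⟨hx, rfl⟩
    exact ⟨Units.mk0 x hx, rfl, by rw [cosetIndex, dif_neg hx, ofAdd_toAdd]⟩

variable [Fintype F]

theorem card_cosetIndex_sub_sub_eq {x y : F} (hxy : x ≠ y) (d : G) :
    #{z : F | z - x ≠ 0 ∧ z - y ≠ 0 ∧ cosetIndex φ (z - x) - cosetIndex φ (z - y) = d} =
      #{w : F | w ≠ 0 ∧ w ≠ 1 ∧ cosetIndex φ w = d} := by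
  have hyx : y - x ≠ 0 := sub_ne_zero.mpr hxy.symm
  have hsub_y (w : F) (hw : w - 1 ≠ 0) : (w * y - x) / (w - 1) - y = (y - x) / (w - 1) := by
    field_simp
    ring
  have hsub_x (w : F) (hw : w - 1 ≠ 0) :
      (w * y - x) / (w - 1) - x = w * ((y - x) / (w - 1)) := by
    field_simp
    ring
  refine card_nbij' (fun z => (z - x) / (z - y)) (fun w => (w * y - x) / (w - 1)) ?_ ?_ ?_ ?_
  · intro z hz
    simp only [mem_coe, mem_filter_univ] at hz ⊢
    obtain ⟨hx, hy, hd⟩ := hz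
    refine ⟨div_ne_zero hx hy, fun h => hxy ?_, by rw [cosetIndex_div φ hx hy, hd]⟩
    rwa [div_eq_one_iff_eq hy, sub_right_inj] at h
  · intro w hw
    simp only [mem_coe, mem_filter_univ] at hw ⊢
    obtain ⟨h0, h1, hd⟩ := hw
    have hw1 : w - 1 ≠ 0 := sub_ne_zero.mpr h1
    have hy : (w * y - x) / (w - 1) - y ≠ 0 := by
      rw [hsub_y w hw1]
      exact div_ne_zero hyx hw1
    have hx : (w * y - x) / (w - 1) - x ≠ 0 := by
      rw [hsub_x w hw1]
      exact mul_ne_zero h0 (by rwa [← hsub_y w hw1])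
    refine ⟨hx, hy, ?_⟩
    rw [← cosetIndex_div φ hx hy, hsub_x w hw1, hsub_y w hw1,
      mul_div_cancel_right₀ w (div_ne_zero hyx hw1), hd]
  · intro z hz
    simp only [mem_coe, mem_filter_univ] at hz
    obtain ⟨-, hy, -⟩ := hz
    dsimp only
    rw [div_sub_one hy, div_mul_eq_mul_div, div_sub' hy, div_div_div_cancel_right₀ hy,
      div_eq_iff (by rwa [sub_sub_sub_cancel_left])]
    ring
  · intro w hw
    simp only [mem_coe, mem_filter_univ] at hw
    have hw1 : w - 1 ≠ 0 := sub_ne_zero.mpr hw.2.1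
    dsimp only
    rw [hsub_x w hw1, hsub_y w hw1, mul_div_cancel_right₀ w (div_ne_zero hyx hw1)]

variable [Fintype G]

theorem card_mul_card_cosetIndex_eq (hφ : Function.Surjective φ) (d : G) :
    Fintype.card G * #{x : F | x ≠ 0 ∧ cosetIndex φ x = d} = Fintype.card F - 1 := by
  have hunits : #{x : F | x ≠ 0 ∧ cosetIndex φ x = d} =
      #{u : Fˣ | φ u = Multiplicative.ofAdd d} := by
    symm
    refine card_bij (fun u _ => (u : F)) (fun u hu => ?_) (fun u _ v _ h => Units.ext h) ?_
    · simp only [mem_filter_univ] at hu ⊢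
      exact (mem_setOf_units_iff φ d u).mp ⟨u, rfl, hu⟩
    · intro x hx
      simp only [mem_filter_univ] at hx ⊢
      obtain ⟨u, rfl, hu⟩ := (mem_setOf_units_iff φ d x).mpr hx
      exact ⟨u, hu, rfl⟩
  have hfiber (g : Multiplicative G) :
      #{u : Fˣ | φ u = g} = #{u : Fˣ | φ u = Multiplicative.ofAdd d} :=
    MonoidHom.card_fiber_eq_of_mem_range φ (hφ g) (hφ _)
  rw [← Fintype.card_units, ← card_univ (α := Fˣ),
    card_eq_sum_card_fiberwise (f := φ) (t := univ) fun _ _ => mem_univ _,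
    sum_congr rfl fun g _ => hfiber g, sum_const, card_univ, Fintype.card_multiplicative,
    hunits, smul_eq_mul]

theorem card_cosetIndex_eq (hφ : Function.Surjective φ) {t : ℕ}
    (hcard : Fintype.card F = Fintype.card G * t + 1) (d : G) :
    #{x : F | x ≠ 0 ∧ cosetIndex φ x = d} = t := by
  have h := card_mul_card_cosetIndex_eq φ hφ d
  rw [hcard, Nat.add_sub_cancel] at h
  exact Nat.eq_of_mul_eq_mul_left Fintype.card_pos h

theorem card_cosetIndex_ne_one_eq (hφ : Function.Surjective φ) {t : ℕ}
    (hcard : Fintype.card F = Fintype.card G * t + 1) (d : G) :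
    (#{w : F | w ≠ 0 ∧ w ≠ 1 ∧ cosetIndex φ w = d} : ℝ) = t - if d = 0 then 1 else 0 := by
  have herase : ({w | w ≠ 0 ∧ w ≠ 1 ∧ cosetIndex φ w = d} : Finset F) =
      ({x | x ≠ 0 ∧ cosetIndex φ x = d} : Finset F).erase 1 := by
    ext w
    simp only [mem_filter_univ, mem_erase]
    tauto
  rw [herase]
  by_cases hd : d = 0
  · have h1 : (1 : F) ∈ ({x | x ≠ 0 ∧ cosetIndex φ x = d} : Finset F) := by
      simp [hd, cosetIndex_one]
    rw [card_erase_of_mem h1, Nat.cast_sub (card_pos.mpr ⟨1, h1⟩),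
      card_cosetIndex_eq φ hφ hcard, if_pos hd, Nat.cast_one]
  · have h1 : (1 : F) ∉ ({x | x ≠ 0 ∧ cosetIndex φ x = d} : Finset F) := by
      simp [cosetIndex_one, Ne.symm hd]
    rw [erase_eq_of_notMem h1, card_cosetIndex_eq φ hφ hcard, if_neg hd, sub_zero]

def cosetMatrix : Matrix (G × F) (G × F) ℝ :=
  of fun p q => if q.2 - p.2 ≠ 0 ∧ cosetIndex φ (q.2 - p.2) = p.1 - q.1 then 1 else 0

theorem cosetMatrix_mul_transpose_apply_eq_card (p q : G × F) :
    (cosetMatrix φ * (cosetMatrix φ)ᵀ) p q =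
      #{z : F | z - p.2 ≠ 0 ∧ z - q.2 ≠ 0 ∧
        cosetIndex φ (z - p.2) - cosetIndex φ (z - q.2) = p.1 - q.1} := by
  have hk (z : F) (k : G) :
      ((z - p.2 ≠ 0 ∧ cosetIndex φ (z - p.2) = p.1 - k) ∧
          (z - q.2 ≠ 0 ∧ cosetIndex φ (z - q.2) = q.1 - k)) ↔
        k = p.1 - cosetIndex φ (z - p.2) ∧ (z - p.2 ≠ 0 ∧ z - q.2 ≠ 0 ∧
          cosetIndex φ (z - p.2) - cosetIndex φ (z - q.2) = p.1 - q.1) := by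
    constructor
    · rintro ⟨⟨hp, hkp⟩, hq, hkq⟩
      exact ⟨by grind, hp, hq, by grind⟩
    · rintro ⟨rfl, hp, hq, hpq⟩
      exact ⟨⟨hp, by abel⟩, hq, by grind⟩
  simp only [mul_apply, transpose_apply, cosetMatrix, of_apply, Fintype.sum_prod_type,
    ite_zero_mul_ite_zero, mul_one, hk]
  rw [sum_comm, natCast_card_filter]
  simp only [ite_and, sum_ite_eq', mem_univ, if_true]

theorem cosetMatrix_mul_transpose_apply (hφ : Function.Surjective φ) {t : ℕ}
    (hcard : Fintype.card F = Fintype.card G * t + 1) (p q : G × F) :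
    (cosetMatrix φ * (cosetMatrix φ)ᵀ) p q =
      if p.2 = q.2 then (if p.1 = q.1 then (Fintype.card G * t : ℝ) else 0)
      else (t : ℝ) - if p.1 = q.1 then 1 else 0 := by
  rw [cosetMatrix_mul_transpose_apply_eq_card]
  rcases eq_or_ne p.2 q.2 with hxy | hxy
  · rw [hxy, if_pos rfl]
    simp only [sub_self, eq_comm (a := (0 : G)), sub_eq_zero, sub_ne_zero]
    split_ifs with h
    · simp only [h, and_self, and_true]
      rw [filter_ne', card_erase_of_mem (mem_univ _), card_univ, hcard]
      push_cast
      ring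
    · simp [h]
  · rw [card_cosetIndex_sub_sub_eq φ hxy, card_cosetIndex_ne_one_eq φ hφ hcard, if_neg hxy]
    simp only [sub_eq_zero]

variable [DecidableEq G]

def cstar (t : ℕ) : Matrix (G × F) (G × F) ℝ :=
  (t : ℝ) • (1 - (1 / ((Fintype.card G : ℝ) * Fintype.card F)) • of fun _ _ => 1)
    - (1 / (Fintype.card F : ℝ)) • (cosetMatrix φ * (cosetMatrix φ)ᵀ)
    - (1 / ((Fintype.card F : ℝ) * (Fintype.card F - Fintype.card G))) •
        ((of fun _ _ => 1) ⊗ₖ (1 - (1 / (Fintype.card F : ℝ)) • of fun _ _ => 1))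
    + ((Fintype.card G : ℝ) * (t : ℝ) ^ 2 / (Fintype.card F : ℝ) ^ 2) • of fun _ _ => 1

theorem cstar_eq (hφ : Function.Surjective φ) {t : ℕ}
    (hcard : Fintype.card F = Fintype.card G * t + 1) :
    cstar φ t = (0 : ℝ) • (averaging ℝ G ⊗ₖ averaging ℝ F)
      + ((t : ℝ) - 1 / (Fintype.card F - Fintype.card G)) • (averaging ℝ G ⊗ₖ centering ℝ F)
      + (t : ℝ) • (centering ℝ G ⊗ₖ averaging ℝ F)
      + ((t : ℝ) - 1) • (centering ℝ G ⊗ₖ centering ℝ F) := by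
  have ht : 1 ≤ t := by
    have := Fintype.one_lt_card (α := F)
    rw [hcard] at this
    exact Nat.pos_of_ne_zero fun ht0 => by simp [ht0] at this
  have hG : (1 : ℝ) ≤ Fintype.card G := by exact_mod_cast Fintype.card_pos
  have hF : (Fintype.card F : ℝ) = Fintype.card G * t + 1 := by exact_mod_cast hcard
  have hFG : (1 : ℝ) ≤ Fintype.card F - Fintype.card G := by
    rw [hF]
    nlinarith [show (1 : ℝ) ≤ t by exact_mod_cast ht]
  have ht' : (t : ℝ) = (Fintype.card F - 1) / Fintype.card G := by
    rw [hF]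
    field_simp
    ring
  ext p q
  simp only [cstar, Matrix.add_apply, Matrix.sub_apply, Matrix.smul_apply, kroneckerMap_apply,
    of_apply, one_apply, cosetMatrix_mul_transpose_apply φ hφ hcard, averaging, centering,
    Prod.ext_iff, smul_eq_mul, ht']
  have hF0 : (Fintype.card F : ℝ) ≠ 0 := by linarith
  have hFG0 : (Fintype.card F : ℝ) - Fintype.card G ≠ 0 := by linarith
  by_cases hi : p.1 = q.1 <;> by_cases hx : p.2 = q.2 <;>
    simp only [hi, hx, and_self, and_true, and_false, if_true, if_false] <;> field_simp <;> ring

end CosetIndex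

end CosetDesign

end

theorem stmt_19_general (h t : ℕ) [NeZero h] (F : Type*) [Field F] [Fintype F]
    (hs : Fintype.card F = h * t + 1)
    (φ : Fˣ →* Multiplicative (ZMod h)) (hφ : Function.Surjective φ)
    (C : ZMod h → Set F)
    (hC : ∀ i, C i = {x : F | ∃ u : Fˣ, (u : F) = x ∧ φ u = Multiplicative.ofAdd i})
    (L : Matrix (ZMod h × F) (ZMod h × F) ℝ)
    (hL : ∀ p q : ZMod h × F,
      L p q = if q.2 - p.2 ∈ C (p.1 - q.1) then (1 : ℝ) else 0)
    (s r : ℝ) (hsr : s = (Fintype.card F : ℝ)) (hr : r = (t : ℝ))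
    (Cstar : Matrix (ZMod h × F) (ZMod h × F) ℝ)
    (hCstar : Cstar =
      r • ((1 : Matrix (ZMod h × F) (ZMod h × F) ℝ) -
            (1 / ((h : ℝ) * s)) • Matrix.of (fun _ _ => (1 : ℝ)))
        - (1 / s) • (L * Lᵀ)
        - (1 / (s * (s - (h : ℝ)))) •
            ((Matrix.of (fun _ _ : ZMod h => (1 : ℝ))) ⊗ₖ
              ((1 : Matrix F F ℝ) -
                (1 / s) • Matrix.of (fun _ _ : F => (1 : ℝ))))
        + ((h : ℝ) * r ^ 2 / s ^ 2) • Matrix.of (fun _ _ => (1 : ℝ))) :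
    Cstar.charpoly =
      (X - Polynomial.C r) ^ (h - 1) *
        (X - Polynomial.C (r - 1 / (s - (h : ℝ)))) ^ (Fintype.card F - 1) *
        (X - Polynomial.C (r - 1)) ^ ((h - 1) * (Fintype.card F - 1)) * X := by
  have hcard : Fintype.card F = Fintype.card (ZMod h) * t + 1 := by rw [ZMod.card, hs]
  have hL' : L = CosetDesign.cosetMatrix φ := by
    ext p q
    rw [hL, hC, CosetDesign.mem_setOf_units_iff, CosetDesign.cosetMatrix, of_apply]
    congr
  have hcstar : Cstar = CosetDesign.cstar φ t := by
    rw [hCstar, hL', hsr, hr, CosetDesign.cstar, ZMod.card]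
  subst hsr hr
  rw [hcstar, CosetDesign.cstar_eq φ hφ hcard, CosetDesign.charpoly_averaging_centering_kronecker,
    ZMod.card, map_zero, sub_zero]
  ring

/-- Theorem `spectrN(1)`. Let F be the field of order s = ht+1,
C_i the cosets of the index-h subgroup of F* (fibers of a surjective
homomorphism φ : F* → ℤ/h, so C_i·C_j = C_{i+j}), r = t, v = hs, and
L the v×v block matrix with (i,j) block L_{i−j}, where L_k(x,y) = 1 iff
y − x ∈ C_k. Then the matrix
C* = r·K_v − (1/s)·L·Lᵀ − (1/(s(s−h)))·(J_h ⊗ K_s) + (hr²/s²)·J_v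
has spectrum r^{h−1} (r − 1/(s−h))^{s−1} (r−1)^{(h−1)(s−1)} 0¹. -/
theorem stmt_19 (h t : ℕ) [NeZero h] (F : Type*) [Field F] [Fintype F]
    (hs : Fintype.card F = h * t + 1) (hh : 2 ≤ h) (ht : 2 ≤ t)
    (φ : Fˣ →* Multiplicative (ZMod h)) (hφ : Function.Surjective φ)
    (C : ZMod h → Set F)
    (hC : ∀ i, C i = {x : F | ∃ u : Fˣ, (u : F) = x ∧ φ u = Multiplicative.ofAdd i})
    (L : Matrix (ZMod h × F) (ZMod h × F) ℝ)
    (hL : ∀ p q : ZMod h × F,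
      L p q = if q.2 - p.2 ∈ C (p.1 - q.1) then (1 : ℝ) else 0)
    (s r : ℝ) (hsr : s = (Fintype.card F : ℝ)) (hr : r = (t : ℝ))
    (Cstar : Matrix (ZMod h × F) (ZMod h × F) ℝ)
    (hCstar : Cstar =
      r • ((1 : Matrix (ZMod h × F) (ZMod h × F) ℝ) -
            (1 / ((h : ℝ) * s)) • Matrix.of (fun _ _ => (1 : ℝ)))
        - (1 / s) • (L * Lᵀ)
        - (1 / (s * (s - (h : ℝ)))) •
            ((Matrix.of (fun _ _ : ZMod h => (1 : ℝ))) ⊗ₖ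
              ((1 : Matrix F F ℝ) -
                (1 / s) • Matrix.of (fun _ _ : F => (1 : ℝ))))
        + ((h : ℝ) * r ^ 2 / s ^ 2) • Matrix.of (fun _ _ => (1 : ℝ))) :
    Cstar.charpoly =
      (X - Polynomial.C r) ^ (h - 1) *
        (X - Polynomial.C (r - 1 / (s - (h : ℝ)))) ^ (Fintype.card F - 1) *
        (X - Polynomial.C (r - 1)) ^ ((h - 1) * (Fintype.card F - 1)) * X :=
  stmt_19_general h t F hs φ hφ C hC L hL s r hsr hr Cstar hCstar
end
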